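/- Let G be a finite directed graph, k a positive integer, and u, v distinct vertices of G such that G has a directed path from u to v or from v to u. Then for every u-directed tree T in G with k arcs and every v-directed tree T' in G with k arcs, there exists a reconfiguration sequence between T and T' in which every intermediate subgraph is a directed tree in G with k arcs. -/

import Mathlib

/-- The vertex set of a set of arcs. -/
def arcVerts {V : Type*} [DecidableEq V] (T : Finset (V × V)) : Finset V :=
  T.image Prod.fst ∪ T.image Prod.snd

/-- The in-degree of a vertex `v` in a set of arcs `T`. -/
def inDeg {V : Type*} [DecidableEq V] (T : Finset (V × V)) (v : V) : ℕ :=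
  (T.filter fun e => e.2 = v).card

/-- The step relation of a set of arcs: `arcRel T a b` iff `(a, b)` is an arc of `T`. -/
def arcRel {V : Type*} (T : Finset (V × V)) : V → V → Prop := fun a b => (a, b) ∈ T

/-- `T` is (the arc set of) a directed tree rooted at `r`: the root has in-degree `0`,
every other vertex has in-degree exactly `1`, and every vertex is reachable from `r`. -/
def IsDirTree {V : Type*} [DecidableEq V] (T : Finset (V × V)) (r : V) : Prop :=
  inDeg T r = 0 ∧ (∀ v ∈ arcVerts T, v ≠ r → inDeg T v = 1) ∧
    ∀ v ∈ arcVerts T, Relation.ReflTransGen (arcRel T) r v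

/-!
Two directed trees with the same root `r` are connected by exchanging one arc at a time:
grow a common subtree `F` from `r`; the next arc `e = (x, y)` of the target whose tail is
reached by `F` either replaces the in-arc of `y` in the current tree, or, if `y` is new, is
added while a leaf arc outside `F` is deleted. The root itself moves backwards along an arc
`(x, c)` in one exchange: `(x, c)` replaces the in-arc of `x`, or, if `x` is new, a leaf arc.
Following a directed path between `u` and `v` thus turns the `v`-tree into a `u`-tree, or
conversely, and the same-root case finishes the reconfiguration.
-/

open Relation Finset

theorem Relation.ReflTransGen.exists_seq {α : Type*} {r : α → α → Prop} {a b : α}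
    (h : ReflTransGen r a b) :
    ∃ ℓ, ∃ f : ℕ → α, f 0 = a ∧ f ℓ = b ∧ ∀ i < ℓ, r (f i) (f (i + 1)) := by
  induction h using ReflTransGen.head_induction_on with
  | refl => exact ⟨0, fun _ => b, rfl, rfl, fun _ h => absurd h (Nat.not_lt_zero _)⟩
  | @head x y hxy _ ih =>
    obtain ⟨ℓ, f, hf0, hfℓ, hf⟩ := ih
    refine ⟨ℓ + 1, fun | 0 => _ | i + 1 => f i, rfl, hfℓ, ?_⟩
    rintro (_ | i) hi
    · show r x (f 0)
      rwa [hf0]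
    · exact hf i (by omega)

section

variable {V : Type*}

theorem reflTransGen_arcRel_mono {S T : Finset (V × V)} (h : S ⊆ T) {a b : V}
    (hab : ReflTransGen (arcRel S) a b) : ReflTransGen (arcRel T) a b :=
  ReflTransGen.mono (fun _ _ hxy => h hxy) _ _ hab

def IsGrounded (F : Finset (V × V)) (r : V) : Prop :=
  ∀ e ∈ F, ReflTransGen (arcRel F) r e.1

theorem isGrounded_empty (r : V) : IsGrounded ∅ r :=
  fun _ h => absurd h (notMem_empty _)

variable [DecidableEq V]

theorem IsGrounded.insert {F : Finset (V × V)} {r : V} (hF : IsGrounded F r) {e : V × V}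
    (he : ReflTransGen (arcRel F) r e.1) : IsGrounded (insert e F) r :=
  (forall_mem_insert _ _ _).2 ⟨reflTransGen_arcRel_mono (subset_insert _ _) he,
    fun f hf => reflTransGen_arcRel_mono (subset_insert _ _) (hF f hf)⟩

theorem isDirTree_iff {T : Finset (V × V)} {r : V} :
    IsDirTree T r ↔
      (∀ e ∈ T, e.2 ≠ r) ∧ Set.InjOn Prod.snd (T : Set (V × V)) ∧ IsGrounded T r := by
  have hmem : ∀ v, v ∈ arcVerts T ↔ (∃ e ∈ T, e.1 = v) ∨ ∃ e ∈ T, e.2 = v := by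
    simp [arcVerts]
  constructor
  · rintro ⟨hr, hdeg, hreach⟩
    have hne : ∀ e ∈ T, e.2 ≠ r := fun e he h =>
      (filter_eq_empty_iff.1 (card_eq_zero.1 hr)) he h
    refine ⟨hne, fun e he f hf hef => ?_,
      fun e he => hreach _ ((hmem _).2 (.inl ⟨e, he, rfl⟩))⟩
    have h1 := hdeg f.2 ((hmem _).2 (.inr ⟨f, hf, rfl⟩)) (hne f hf)
    exact card_le_one.1 h1.le e (mem_filter.2 ⟨he, hef⟩) f (mem_filter.2 ⟨hf, rfl⟩)
  · rintro ⟨hne, hinj, hgr⟩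
    have hreach : ∀ v ∈ arcVerts T, ReflTransGen (arcRel T) r v := by
      intro v hv
      rcases (hmem v).1 hv with ⟨e, he, rfl⟩ | ⟨e, he, rfl⟩
      · exact hgr e he
      · exact (hgr e he).tail he
    refine ⟨card_eq_zero.2 (filter_eq_empty_iff.2 hne), fun v hv hvr => ?_, hreach⟩
    obtain ⟨c, -, hc⟩ := (hreach v hv).cases_tail.resolve_left hvr
    refine card_eq_one.2 ⟨(c, v), eq_singleton_iff_unique_mem.2 ⟨mem_filter.2 ⟨hc, rfl⟩,
      fun e he => hinj (mem_filter.1 he).1 hc (mem_filter.1 he).2⟩⟩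

theorem isDirTree_empty (r : V) : IsDirTree ∅ r :=
  isDirTree_iff.2 ⟨by simp, by simp, isGrounded_empty r⟩

theorem injOn_snd_insert {S : Finset (V × V)} (hS : Set.InjOn Prod.snd (S : Set (V × V)))
    {e : V × V} (he : ∀ f ∈ S, f.2 ≠ e.2) :
    Set.InjOn Prod.snd ((insert e S : Finset (V × V)) : Set (V × V)) := by
  rw [coe_insert, Set.injOn_insert fun h => he e h rfl]
  exact ⟨hS, fun ⟨f, hf, hfe⟩ => he f hf hfe⟩

namespace IsDirTree

variable {X : Finset (V × V)} {r : V}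

theorem head_ne_root (hX : IsDirTree X r) {e : V × V} (he : e ∈ X) : e.2 ≠ r :=
  (isDirTree_iff.1 hX).1 e he

theorem injOn_snd (hX : IsDirTree X r) : Set.InjOn Prod.snd (X : Set (V × V)) :=
  (isDirTree_iff.1 hX).2.1

theorem isGrounded (hX : IsDirTree X r) : IsGrounded X r :=
  (isDirTree_iff.1 hX).2.2

theorem mem_of_reflTransGen_snd (hX : IsDirTree X r) {F : Finset (V × V)} (hFX : F ⊆ X)
    {g : V × V} (hg : g ∈ X) (h : ReflTransGen (arcRel F) r g.2) : g ∈ F := by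
  rcases h.cases_tail with h | ⟨c, -, hc⟩
  · exact absurd h (hX.head_ne_root hg)
  · rwa [← hX.injOn_snd (hFX hc) hg rfl]

theorem not_transGen_self (hX : IsDirTree X r) (w : V) : ¬ TransGen (arcRel X) w w := by
  suffices h : ∀ w, ReflTransGen (arcRel X) r w → ¬ TransGen (arcRel X) w w by
    intro hw
    obtain ⟨d, -, hd⟩ := TransGen.tail'_iff.1 hw
    exact h w ((hX.isGrounded _ hd).tail hd) hw
  intro w hw
  induction hw with
  | refl =>
    intro h
    obtain ⟨d, -, hd⟩ := TransGen.tail'_iff.1 h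
    exact hX.head_ne_root hd rfl
  | @tail b c _ hbc ih =>
    intro hc
    obtain ⟨d, hcd, hdc⟩ := TransGen.tail'_iff.1 hc
    have hdb : d = b := congrArg Prod.fst (hX.injOn_snd hdc hbc rfl)
    exact ih (TransGen.head' hbc (hdb ▸ hcd))

/-- Maximising the number of ancestor arcs produces an arc without children, since a child
has strictly more ancestors in an acyclic graph. -/
theorem exists_leaf (hX : IsDirTree X r) {F : Finset (V × V)} (hFX : F ⊆ X)
    (hF : IsGrounded F r) (hne : (X \ F).Nonempty) :
    ∃ g ∈ X \ F, ∀ e ∈ X, e.1 ≠ g.2 := by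
  classical
  let anc : V × V → ℕ := fun g => #(X.filter fun f => ReflTransGen (arcRel X) f.2 g.2)
  obtain ⟨g, hg, hmax⟩ := exists_max_image (X \ F) anc hne
  obtain ⟨hgX, hgF⟩ := mem_sdiff.1 hg
  refine ⟨g, hg, fun e he hge => ?_⟩
  have heF : e ∉ F := fun heF =>
    hgF (hX.mem_of_reflTransGen_snd hFX hgX (hge ▸ hF e heF))
  have hsub : (X.filter fun f => ReflTransGen (arcRel X) f.2 g.2) ⊆
      X.filter fun f => ReflTransGen (arcRel X) f.2 e.2 :=
    fun f hf => mem_filter.2 ⟨(mem_filter.1 hf).1,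
      (mem_filter.1 hf).2.tail (show (g.2, e.2) ∈ X from hge ▸ he)⟩
  have hlt : anc g < anc e := by
    refine card_lt_card ((ssubset_iff_of_subset hsub).2 ⟨e, mem_filter.2 ⟨he, .refl⟩, ?_⟩)
    exact fun h => hX.not_transGen_self e.2 (TransGen.tail' (hge ▸ (mem_filter.1 h).2) he)
  exact (hmax e (mem_sdiff.2 ⟨he, heF⟩)).not_gt hlt

theorem exists_mem_sdiff_reflTransGen_fst (hX : IsDirTree X r) {F : Finset (V × V)}
    (hFX : F ⊆ X) (hne : (X \ F).Nonempty) :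
    ∃ e ∈ X \ F, ReflTransGen (arcRel F) r e.1 := by
  by_contra! h
  have hreach : ∀ w, ReflTransGen (arcRel X) r w → ReflTransGen (arcRel F) r w := by
    intro w hw
    induction hw with
    | refl => exact .refl
    | @tail b c _ hbc ih =>
      by_cases hF : (b, c) ∈ F
      · exact ih.tail hF
      · exact absurd ih (h _ (mem_sdiff.2 ⟨hbc, hF⟩))
  obtain ⟨g, hg⟩ := hne
  obtain ⟨hgX, hgF⟩ := mem_sdiff.1 hg
  exact hgF (hX.mem_of_reflTransGen_snd hFX hgX (hreach _ ((hX.isGrounded g hgX).tail hgX)))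

theorem filter_snd_ne_eq_erase (hX : IsDirTree X r) {e : V × V} (he : e ∈ X) :
    X.filter (fun f => f.2 ≠ e.2) = X.erase e := by
  ext f
  simp only [mem_filter, mem_erase]
  exact ⟨fun ⟨hf, hfe⟩ => ⟨fun h => hfe (h ▸ rfl), hf⟩,
    fun ⟨hfe, hf⟩ => ⟨hf, fun h => hfe (hX.injOn_snd hf he h)⟩⟩

theorem reparent {x y : V} (hX : IsDirTree X r) (hyr : y ≠ r)
    (hx : ReflTransGen (arcRel (X.filter fun f => f.2 ≠ y)) r x) :
    IsDirTree (insert (x, y) (X.filter fun f => f.2 ≠ y)) r := by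
  set S := X.filter fun f => f.2 ≠ y
  have hSX : S ⊆ X := filter_subset _ _
  have hx' := reflTransGen_arcRel_mono (subset_insert (x, y) S) hx
  have hreach : ∀ w, ReflTransGen (arcRel X) r w →
      ReflTransGen (arcRel (insert (x, y) S)) r w := by
    intro w hw
    induction hw with
    | refl => exact .refl
    | @tail b c _ hbc ih =>
      by_cases hc : c = y
      · exact hc ▸ hx'.tail (mem_insert_self _ _)
      · exact ih.tail (mem_insert_of_mem (mem_filter.2 ⟨hbc, hc⟩))
  refine isDirTree_iff.2
    ⟨(forall_mem_insert _ _ _).2 ⟨hyr, fun e he => hX.head_ne_root (hSX he)⟩,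
      injOn_snd_insert (hX.injOn_snd.mono (coe_subset.2 hSX)) fun f hf => (mem_filter.1 hf).2,
      (forall_mem_insert _ _ _).2 ⟨hx', fun e he => hreach _ (hX.isGrounded e (hSX he))⟩⟩

theorem erase_leaf (hX : IsDirTree X r) {g : V × V}
    (hleaf : ∀ e ∈ X, e.1 ≠ g.2) : IsDirTree (X.erase g) r := by
  have hsub := erase_subset g X
  have hreach : ∀ w, ReflTransGen (arcRel X) r w →
      w = g.2 ∨ ReflTransGen (arcRel (X.erase g)) r w := by
    intro w hw
    induction hw with
    | refl => exact .inr .refl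
    | @tail b c _ hbc ih =>
      rcases ih with hb | ih
      · exact absurd hb (hleaf _ hbc)
      · by_cases hg : (b, c) = g
        · exact .inl (congrArg Prod.snd hg)
        · exact .inr (ih.tail (mem_erase.2 ⟨hg, hbc⟩))
  refine isDirTree_iff.2 ⟨fun e he => hX.head_ne_root (hsub he),
    hX.injOn_snd.mono (coe_subset.2 hsub), fun e he => ?_⟩
  exact (hreach e.1 (hX.isGrounded e (hsub he))).resolve_left (hleaf e (hsub he))

theorem reroot {c x : V} (hX : IsDirTree X c) (hxc : x ≠ c) :
    IsDirTree (insert (x, c) (X.filter fun f => f.2 ≠ x)) x := by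
  set S := X.filter fun f => f.2 ≠ x
  have hSX : S ⊆ X := filter_subset _ _
  have hreach : ∀ w, ReflTransGen (arcRel X) c w →
      ReflTransGen (arcRel (insert (x, c) S)) x w := by
    intro w hw
    induction hw with
    | refl => exact .single (mem_insert_self _ _)
    | @tail b d _ hbd ih =>
      by_cases hd : d = x
      · exact hd ▸ .refl
      · exact ih.tail (mem_insert_of_mem (mem_filter.2 ⟨hbd, hd⟩))
  refine isDirTree_iff.2
    ⟨(forall_mem_insert _ _ _).2 ⟨hxc.symm, fun e he => (mem_filter.1 he).2⟩,
      injOn_snd_insert (hX.injOn_snd.mono (coe_subset.2 hSX)) fun f hf => hX.head_ne_root (hSX hf),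
      (forall_mem_insert _ _ _).2 ⟨.refl, fun e he => hreach _ (hX.isGrounded e (hSX he))⟩⟩

end IsDirTree

def IsDirTreeIn (A : Finset (V × V)) (k : ℕ) (X : Finset (V × V)) : Prop :=
  X ⊆ A ∧ (∃ r, IsDirTree X r) ∧ X.card = k

def TreeStep (A : Finset (V × V)) (k : ℕ) (X Y : Finset (V × V)) : Prop :=
  IsDirTreeIn A k X ∧ IsDirTreeIn A k Y ∧ (X \ Y).card = 1 ∧ (Y \ X).card = 1

section Reconfiguration

variable {A : Finset (V × V)} {k : ℕ}

instance : Std.Symm (TreeStep A k) := ⟨fun _ _ ⟨hX, hY, h1, h2⟩ => ⟨hY, hX, h2, h1⟩⟩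

theorem treeStep_insert_erase {X : Finset (V × V)} {e g : V × V} {r : V}
    (hX : IsDirTreeIn A k X) (heA : e ∈ A) (heX : e ∉ X) (hg : g ∈ X)
    (h : IsDirTree (insert e (X.erase g)) r) : TreeStep A k X (insert e (X.erase g)) := by
  have heX' : e ∉ X.erase g := fun h => heX (mem_of_mem_erase h)
  have hl : X \ insert e (X.erase g) = {g} := by ext; aesop
  have hr : insert e (X.erase g) \ X = {e} := by ext; aesop
  refine ⟨hX, ⟨insert_subset heA ((erase_subset g X).trans hX.1), ⟨r, h⟩, ?_⟩, ?_, ?_⟩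
  · rw [card_insert_of_notMem heX', card_erase_add_one hg, hX.2.2]
  · rw [hl, card_singleton]
  · rw [hr, card_singleton]

theorem IsDirTree.exists_reroot_of_arc {X : Finset (V × V)} {c x : V} (hX : IsDirTree X c)
    (hXA : X ⊆ A) (hXk : X.card = k) (hxc : (x, c) ∈ A) :
    ∃ Y, IsDirTree Y x ∧ Y ⊆ A ∧ Y.card = k ∧ ReflTransGen (TreeStep A k) X Y := by
  rcases X.eq_empty_or_nonempty with rfl | hne
  · exact ⟨∅, isDirTree_empty x, empty_subset A, hXk, .refl⟩
  by_cases hx : x = c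
  · exact ⟨X, hx ▸ hX, hXA, hXk, .refl⟩
  obtain ⟨g, hg, hY⟩ : ∃ g ∈ X, IsDirTree (insert (x, c) (X.erase g)) x := by
    by_cases hin : ∃ e ∈ X, e.2 = x
    · obtain ⟨e, he, rfl⟩ := hin
      exact ⟨e, he, hX.filter_snd_ne_eq_erase he ▸ hX.reroot hx⟩
    · push Not at hin
      obtain ⟨g, hg, hleaf⟩ := hX.exists_leaf (empty_subset X) (isGrounded_empty c)
        (by rwa [sdiff_empty])
      have hY := (hX.erase_leaf hleaf).reroot hx
      rw [filter_true_of_mem fun f hf => hin f (mem_of_mem_erase hf)] at hY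
      exact ⟨g, (mem_sdiff.1 hg).1, hY⟩
  have hstep := treeStep_insert_erase ⟨hXA, ⟨c, hX⟩, hXk⟩ hxc (fun h => hX.head_ne_root h rfl)
    hg hY
  exact ⟨_, hY, hstep.2.1.1, hstep.2.1.2.2, .single hstep⟩

theorem IsDirTree.exists_reroot_of_reflTransGen {X : Finset (V × V)} {s t : V}
    (hpath : ReflTransGen (arcRel A) s t) (hX : IsDirTree X t) (hXA : X ⊆ A) (hXk : X.card = k) :
    ∃ Y, IsDirTree Y s ∧ Y ⊆ A ∧ Y.card = k ∧ ReflTransGen (TreeStep A k) X Y := by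
  induction hpath using ReflTransGen.head_induction_on with
  | refl => exact ⟨X, hX, hXA, hXk, .refl⟩
  | head hsc _ ih =>
    obtain ⟨Y, hY, hYA, hYk, hXY⟩ := ih
    obtain ⟨Z, hZ, hZA, hZk, hYZ⟩ := hY.exists_reroot_of_arc hYA hYk hsc
    exact ⟨Z, hZ, hZA, hZk, hXY.trans hYZ⟩

theorem IsDirTree.exists_exchange {X Y F : Finset (V × V)} {r : V} {e : V × V}
    (hX : IsDirTree X r) (hY : IsDirTree Y r) (hXY : Y.card ≤ X.card) (hFX : F ⊆ X)
    (hFY : F ⊆ Y) (hF : IsGrounded F r) (heY : e ∈ Y) (heF : e ∉ F) (heX : e ∉ X)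
    (hre : ReflTransGen (arcRel F) r e.1) :
    ∃ g ∈ X, g ∉ F ∧ IsDirTree (insert e (X.erase g)) r := by
  have hFS : F ⊆ X.filter fun f => f.2 ≠ e.2 := fun f hf =>
    mem_filter.2 ⟨hFX hf, fun h => heF (hY.injOn_snd (hFY hf) heY h ▸ hf)⟩
  have hZ : IsDirTree (insert e (X.filter fun f => f.2 ≠ e.2)) r :=
    hX.reparent (hY.head_ne_root heY) (reflTransGen_arcRel_mono hFS hre)
  by_cases hin : ∃ f ∈ X, f.2 = e.2
  · obtain ⟨f, hfX, hfe⟩ := hin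
    have hS := hX.filter_snd_ne_eq_erase hfX
    rw [hfe] at hS
    refine ⟨f, hfX, fun hfF => heX ?_, hS ▸ hZ⟩
    rwa [← hY.injOn_snd (hFY hfF) heY hfe]
  · push Not at hin
    rw [filter_true_of_mem hin] at hZ
    have hne : (insert e X \ insert e F).Nonempty := sdiff_nonempty.2 fun h => by
      have := card_le_card (h.trans (insert_subset heY hFY))
      rw [card_insert_of_notMem heX] at this
      omega
    obtain ⟨g, hg, hleaf⟩ := hZ.exists_leaf (insert_subset_insert e hFX) (hF.insert hre) hne
    simp only [mem_sdiff, mem_insert, not_or] at hg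
    obtain ⟨hgX, hge, hgF⟩ := hg
    exact ⟨g, hgX.resolve_left hge, hgF,
      erase_insert_of_ne (Ne.symm hge) ▸ hZ.erase_leaf hleaf⟩

theorem IsDirTree.reflTransGen_treeStep_of_isGrounded {X Y F : Finset (V × V)} {r : V}
    (hX : IsDirTree X r) (hY : IsDirTree Y r) (hXA : X ⊆ A) (hYA : Y ⊆ A) (hXk : X.card = k)
    (hYk : Y.card = k) (hFX : F ⊆ X) (hFY : F ⊆ Y) (hF : IsGrounded F r) :
    ReflTransGen (TreeStep A k) X Y := by
  rcases (Y \ F).eq_empty_or_nonempty with hYF | hne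
  · have hYX : Y ⊆ X := (sdiff_eq_empty_iff_subset.1 hYF).trans hFX
    exact eq_of_subset_of_card_le hYX (by omega) ▸ .refl
  obtain ⟨e, heYF, hre⟩ := hY.exists_mem_sdiff_reflTransGen_fst hFY hne
  obtain ⟨heY, heF⟩ := mem_sdiff.1 heYF
  have hdec : (Y \ insert e F).card < (Y \ F).card := by
    rw [sdiff_insert]
    exact card_erase_lt_of_mem heYF
  by_cases heX : e ∈ X
  · exact hX.reflTransGen_treeStep_of_isGrounded hY hXA hYA hXk hYk (insert_subset heX hFX)
      (insert_subset heY hFY) (hF.insert hre)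
  obtain ⟨g, hgX, hgF, hZ⟩ := hX.exists_exchange hY (by omega) hFX hFY hF heY heF heX hre
  have hstep := treeStep_insert_erase ⟨hXA, ⟨r, hX⟩, hXk⟩ (hYA heY) heX hgX hZ
  have hFZ : insert e F ⊆ insert e (X.erase g) :=
    insert_subset_insert e fun f hf => mem_erase.2 ⟨fun h => hgF (h ▸ hf), hFX hf⟩
  exact .head hstep (hZ.reflTransGen_treeStep_of_isGrounded hY hstep.2.1.1 hYA hstep.2.1.2.2
    hYk hFZ (insert_subset heY hFY) (hF.insert hre))
termination_by (Y \ F).card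

theorem IsDirTree.reflTransGen_treeStep {X Y : Finset (V × V)} {r : V}
    (hX : IsDirTree X r) (hY : IsDirTree Y r) (hXA : X ⊆ A) (hYA : Y ⊆ A) (hXk : X.card = k)
    (hYk : Y.card = k) : ReflTransGen (TreeStep A k) X Y :=
  hX.reflTransGen_treeStep_of_isGrounded hY hXA hYA hXk hYk (empty_subset X) (empty_subset Y)
    (isGrounded_empty r)

end Reconfiguration

end

theorem stmt10_general {V : Type*} [DecidableEq V] (A : Finset (V × V))
    (k : ℕ) (u v : V)
    (hpath : Relation.ReflTransGen (arcRel A) u v ∨ Relation.ReflTransGen (arcRel A) v u)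
    (T T' : Finset (V × V)) (hTA : T ⊆ A) (hT'A : T' ⊆ A)
    (hT : IsDirTree T u) (hT' : IsDirTree T' v)
    (hkT : T.card = k) (hkT' : T'.card = k) :
    ∃ ℓ, ∃ f : ℕ → Finset (V × V), f 0 = T ∧ f ℓ = T' ∧
      (∀ i ≤ ℓ, f i ⊆ A ∧ (∃ r, IsDirTree (f i) r) ∧ (f i).card = k) ∧
      (∀ i < ℓ, (f i \ f (i + 1)).card = 1 ∧ (f (i + 1) \ f i).card = 1) := by
  have hR : ReflTransGen (TreeStep A k) T T' := by
    rcases hpath with hp | hp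
    · obtain ⟨Y, hY, hYA, hYk, hT'Y⟩ := hT'.exists_reroot_of_reflTransGen hp hT'A hkT'
      exact Std.Symm.symm _ _ (hT'Y.trans (hY.reflTransGen_treeStep hT hYA hTA hYk hkT))
    · obtain ⟨Y, hY, hYA, hYk, hTY⟩ := hT.exists_reroot_of_reflTransGen hp hTA hkT
      exact hTY.trans (hY.reflTransGen_treeStep hT' hYA hT'A hYk hkT')
  obtain ⟨ℓ, f, hf0, hfℓ, hf⟩ := hR.exists_seq
  refine ⟨ℓ, f, hf0, hfℓ, fun i hi => ?_, fun i hi => (hf i hi).2.2⟩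
  rcases hi.lt_or_eq with hi | rfl
  · exact (hf i hi).1
  · exact hfℓ ▸ ⟨hT'A, ⟨v, hT'⟩, hkT'⟩

/-- If `u ≠ v` and `G` has a directed path from `u` to `v` or from `v` to `u`, then any
`u`-directed tree with `k` arcs and any `v`-directed tree with `k` arcs in `G` are
connected by a reconfiguration sequence of directed trees with `k` arcs in `G`. -/
theorem stmt10 {V : Type*} [Fintype V] [DecidableEq V] (A : Finset (V × V))
    (k : ℕ) (hk : 0 < k) (u v : V) (huv : u ≠ v)
    (hpath : Relation.ReflTransGen (arcRel A) u v ∨ Relation.ReflTransGen (arcRel A) v u)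
    (T T' : Finset (V × V)) (hTA : T ⊆ A) (hT'A : T' ⊆ A)
    (hT : IsDirTree T u) (hT' : IsDirTree T' v)
    (hkT : T.card = k) (hkT' : T'.card = k) :
    ∃ ℓ, ∃ f : ℕ → Finset (V × V), f 0 = T ∧ f ℓ = T' ∧
      (∀ i ≤ ℓ, f i ⊆ A ∧ (∃ r, IsDirTree (f i) r) ∧ (f i).card = k) ∧
      (∀ i < ℓ, (f i \ f (i + 1)).card = 1 ∧ (f (i + 1) \ f i).card = 1) :=
  stmt10_general A k u v hpath T T' hTA hT'A hT hT' hkT hkT'
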